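/- The inclusion functor ι : Preglid FR → Mod oFF_Λ R admits a left adjoint κ : Mod oFF_Λ R → Preglid FR, given on objects by κ(M)(λ) = im(M(1_{λ,∞}) : M(λ) → M(∞)) for λ ∈ Λ and κ(M)(∞) = M(∞), with the unit of the adjunction given by the canonical maps M(λ) → im(M(1_{λ,∞})). -/

import Mathlib

set_option linter.unusedSectionVars false
set_option maxHeartbeats 1000000
set_option synthInstance.maxHeartbeats 1000000
set_option maxHeartbeats 2000000

noncomputable section

open CategoryTheory CategoryTheory.Limits

universe u

namespace GliderPaper

/-- A `Γ`-filtration `FR` on a unital ring `R`: additive subgroups `F γ` with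
`1 ∈ F 1`, monotone in `γ`, and multiplicative. -/
structure RingFiltration (Γ : Type u) [Group Γ] [PartialOrder Γ] (R : Type u) [Ring R] where
  F : Γ → AddSubgroup R
  one_mem : (1 : R) ∈ F 1
  mono : ∀ {α β : Γ}, α ≤ β → F α ≤ F β
  mul_mem : ∀ {α β : Γ} {a b : R}, a ∈ F α → b ∈ F β → a * b ∈ F (α * β)

variable {Γ : Type u} [Group Γ] [PartialOrder Γ]
  [CovariantClass Γ Γ (· * ·) (· ≤ ·)] [CovariantClass Γ Γ (Function.swap (· * ·)) (· ≤ ·)]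
  {R : Type u} [Ring R]

/-- Objects of the extended filtered companion category `oFF_Λ R`:
the disjoint union `Λ ⊔ {∞}`. -/
inductive OFF (FR : RingFiltration Γ R) (Λ : Set Γ) : Type u
  | of (α : Λ)
  | infty

/-- Objects of the filtered companion category `FF_Λ R`: the set `Λ`. -/
inductive FF (FR : RingFiltration Γ R) (Λ : Set Γ) : Type u
  | of (α : Λ)

variable (FR : RingFiltration Γ R) (Λ : Set Γ)

namespace OFF

/-- `le X Y` holds iff the canonical morphism `1_{X,Y}` is defined, i.e. `X ≤ Y` in `Λ`,
or `Y = ∞`. -/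
def le : OFF FR Λ → OFF FR Λ → Prop
  | of α, of β => (α : Γ) ≤ (β : Γ)
  | _, infty => True
  | infty, of _ => False

open scoped Classical in
/-- The additive subgroup of `R` of morphisms `X ⟶ Y` in `oFF_Λ R`:
`Hom(α,β) = F_{βα⁻¹}R` for `α ≤ β` in `Λ`, `Hom(X,∞) = R`, and `0` otherwise. -/
noncomputable def homGrp : OFF FR Λ → OFF FR Λ → AddSubgroup R
  | of α, of β => if (α : Γ) ≤ (β : Γ) then FR.F ((β : Γ) * (α : Γ)⁻¹) else ⊥
  | _, infty => ⊤
  | infty, of _ => ⊥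

theorem le_refl' : ∀ X : OFF FR Λ, le FR Λ X X
  | of _ => _root_.le_refl _
  | infty => trivial

theorem one_mem_homGrp : ∀ {X Y : OFF FR Λ}, le FR Λ X Y → (1 : R) ∈ homGrp FR Λ X Y
  | of α, of β, h => by
      have h' : (α : Γ) ≤ (β : Γ) := h
      have h1 : (1 : Γ) ≤ (β : Γ) * (α : Γ)⁻¹ := by
        rw [← mul_inv_cancel (α : Γ)]
        gcongr
      simpa [homGrp, if_pos h'] using FR.mono h1 FR.one_mem
  | of _, infty, _ => trivial
  | infty, infty, _ => trivial
  | infty, of _, h => h.elim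

theorem mul_mem_homGrp : ∀ {X Y Z : OFF FR Λ} {f g : R},
    f ∈ homGrp FR Λ X Y → g ∈ homGrp FR Λ Y Z → g * f ∈ homGrp FR Λ X Z := by
  intro X Y Z f g hf hg
  cases X <;> cases Y <;> cases Z <;> simp only [homGrp] at hf hg ⊢ <;> try trivial
  case of.of.of a b c =>
    by_cases hab : (a : Γ) ≤ (b : Γ)
    · by_cases hbc : (b : Γ) ≤ (c : Γ)
      · rw [if_pos hab] at hf
        rw [if_pos hbc] at hg
        rw [if_pos (le_trans hab hbc)]
        have := FR.mul_mem hg hf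
        rwa [show (c : Γ) * (b : Γ)⁻¹ * ((b : Γ) * (a : Γ)⁻¹) = (c : Γ) * (a : Γ)⁻¹ by
          group] at this
      · rw [if_neg hbc] at hg
        rw [AddSubgroup.mem_bot] at hg
        subst hg
        simp only [zero_mul]
        exact AddSubgroup.zero_mem _
    · rw [if_neg hab] at hf
      rw [AddSubgroup.mem_bot] at hf
      subst hf
      simp only [mul_zero]
      exact AddSubgroup.zero_mem _
  case of.infty.of a c =>
    rw [AddSubgroup.mem_bot] at hg
    subst hg
    simp only [zero_mul]
    exact AddSubgroup.zero_mem _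
  case infty.of.of b c =>
    rw [AddSubgroup.mem_bot] at hf
    subst hf
    simp only [mul_zero]
    exact AddSubgroup.zero_mem _
  case infty.infty.of c =>
    rw [AddSubgroup.mem_bot] at hg
    subst hg
    simp only [zero_mul]
    exact AddSubgroup.zero_mem _

instance : Category (OFF FR Λ) where
  Hom X Y := homGrp FR Λ X Y
  id X := ⟨1, one_mem_homGrp FR Λ (le_refl' FR Λ X)⟩
  comp f g := ⟨g.1 * f.1, mul_mem_homGrp FR Λ f.2 g.2⟩
  id_comp f := Subtype.ext (mul_one f.1)
  comp_id f := Subtype.ext (one_mul f.1)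
  assoc f g h := Subtype.ext (mul_assoc h.1 g.1 f.1).symm

instance : Preadditive (OFF FR Λ) where
  homGroup X Y := inferInstanceAs (AddCommGroup (homGrp FR Λ X Y))
  add_comp _ _ _ f f' g := Subtype.ext (mul_add g.1 f.1 f'.1)
  comp_add _ _ _ f g g' := Subtype.ext (add_mul g.1 g'.1 f.1)

end OFF

namespace FF

/-- The inclusion of the objects of `FF_Λ R` into those of `oFF_Λ R`. -/
def toOFF : FF FR Λ → OFF FR Λ
  | of α => .of α

instance : Category (FF FR Λ) where
  Hom X Y := OFF.homGrp FR Λ (toOFF FR Λ X) (toOFF FR Λ Y)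
  id X := ⟨1, OFF.one_mem_homGrp FR Λ (OFF.le_refl' FR Λ _)⟩
  comp f g := ⟨g.1 * f.1, OFF.mul_mem_homGrp FR Λ f.2 g.2⟩
  id_comp f := Subtype.ext (mul_one f.1)
  comp_id f := Subtype.ext (one_mul f.1)
  assoc f g h := Subtype.ext (mul_assoc h.1 g.1 f.1).symm

instance : Preadditive (FF FR Λ) where
  homGroup X Y := inferInstanceAs (AddCommGroup (OFF.homGrp FR Λ (toOFF FR Λ X) (toOFF FR Λ Y)))
  add_comp _ _ _ f f' g := Subtype.ext (mul_add g.1 f.1 f'.1)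
  comp_add _ _ _ f g g' := Subtype.ext (add_mul g.1 g'.1 f.1)

end FF

/-- The inclusion functor `j : FF_Λ R ⥤ oFF_Λ R`. -/
def jF : FF FR Λ ⥤ OFF FR Λ where
  obj := FF.toOFF FR Λ
  map f := f
  map_id _ := rfl
  map_comp _ _ := rfl

instance : (jF FR Λ).Additive := ⟨rfl⟩

/-- `Mod C`: the category of additive functors from `C` to abelian groups. -/
abbrev Mod (C : Type u) [Category.{u} C] [Preadditive C] : Type (u + 1) :=
  C ⥤+ AddCommGrpCat.{u}

/-- The component at `X` of a morphism in `Mod C`. -/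
def mapp {C : Type u} [Category.{u} C] [Preadditive C] {M N : Mod C} (f : M ⟶ N) (X : C) :
    M.obj.obj X ⟶ N.obj.obj X :=
  f.hom.app X

/-- The canonical morphism `1_{X,Y}` in `oFF_Λ R`, given by `1_R`. -/
def unitHom (X Y : OFF FR Λ) (h : OFF.le FR Λ X Y) : X ⟶ Y :=
  ⟨1, OFF.one_mem_homGrp FR Λ h⟩

/-- The canonical morphism `1_{α,β}` in `FF_Λ R`, given by `1_R`. -/
def unitHomFF (α β : Λ) (h : (α : Γ) ≤ (β : Γ)) : (FF.of α : FF FR Λ) ⟶ FF.of β :=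
  unitHom FR Λ (.of α) (.of β) h

/-- A module `M` over `oFF_Λ R` is a preglider if all the maps `M(1_{X,Y})` are injective. -/
def IsPreglider (M : Mod (OFF FR Λ)) : Prop :=
  ∀ (X Y : OFF FR Λ) (h : OFF.le FR Λ X Y), Function.Injective (M.obj.map (unitHom FR Λ X Y h))

/-- A module `M` over `FF_Λ R` is a prefragment if all the maps `M(1_{α,β})` are injective. -/
def IsPrefragment (M : Mod (FF FR Λ)) : Prop :=
  ∀ (α β : Λ) (h : (α : Γ) ≤ (β : Γ)), Function.Injective (M.obj.map (unitHomFF FR Λ α β h))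

/-- The category of pregliders: the full subcategory of `Mod (oFF_Λ R)` of pregliders. -/
abbrev Preglid : Type (u + 1) :=
  ObjectProperty.FullSubcategory (fun M : Mod (OFF FR Λ) => IsPreglider FR Λ M)

instance : Preadditive (Preglid FR Λ) := Preadditive.inducedCategory _

/-- The category of prefragments: the full subcategory of `Mod (FF_Λ R)` of prefragments. -/
abbrev Prefrag : Type (u + 1) :=
  ObjectProperty.FullSubcategory (fun M : Mod (FF FR Λ) => IsPrefragment FR Λ M)

instance : Preadditive (Prefrag FR Λ) := Preadditive.inducedCategory _

/-- The inclusion `Preglid FR Λ ⥤ Mod (oFF_Λ R)`. -/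
def iotaF : Preglid FR Λ ⥤ Mod (OFF FR Λ) := ObjectProperty.ι _

/-- The inclusion `Prefrag FR Λ ⥤ Mod (FF_Λ R)`. -/
def etaF : Prefrag FR Λ ⥤ Mod (FF FR Λ) := ObjectProperty.ι _

/-- The component at `X` of a morphism of pregliders. -/
def pgapp {M N : Preglid FR Λ} (f : M ⟶ N) (X : OFF FR Λ) :
    M.obj.obj.obj X ⟶ N.obj.obj.obj X :=
  mapp f.hom X

/-- The component at `X` of a morphism of prefragments. -/
def pfapp {M N : Prefrag FR Λ} (f : M ⟶ N) (X : FF FR Λ) :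
    M.obj.obj.obj X ⟶ N.obj.obj.obj X :=
  mapp f.hom X

/-- The class `Σ` of morphisms of pregliders all of whose components at objects of `Λ`
are isomorphisms. -/
def SigmaClass : MorphismProperty (Preglid FR Λ) :=
  fun _ _ f => ∀ α : Λ, IsIso (pgapp FR Λ f (.of α))

/-- The category of glider representations: the localization of `Preglid FR Λ` at `Σ`. -/
abbrev Glid : Type (u + 1) := (SigmaClass FR Λ).Localization

/-- The localization functor `Q : Preglid FR Λ ⥤ Glid FR Λ`. -/
def QF : Preglid FR Λ ⥤ Glid FR Λ := (SigmaClass FR Λ).Q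

/-- The restriction functor `j^* : Mod (oFF_Λ R) ⥤ Mod (FF_Λ R)`. -/
def jStar : Mod (OFF FR Λ) ⥤ Mod (FF FR Λ) where
  obj M := ⟨jF FR Λ ⋙ M.obj, by haveI : M.obj.Additive := M.property; exact (inferInstance : (jF FR Λ ⋙ M.obj).Additive)⟩
  map {M N} f := ObjectProperty.homMk (Functor.whiskerLeft (jF FR Λ) f.hom)
  map_id _ := rfl
  map_comp _ _ := rfl

theorem isPrefragment_jStar (M : Mod (OFF FR Λ)) (hM : IsPreglider FR Λ M) :
    IsPrefragment FR Λ ((jStar FR Λ).obj M) :=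
  fun α β h => hM (.of α) (.of β) h

/-- The restriction functor `j^* : Preglid FR Λ ⥤ Prefrag FR Λ`. -/
def jRes : Preglid FR Λ ⥤ Prefrag FR Λ where
  obj M := ⟨(jStar FR Λ).obj M.obj, isPrefragment_jStar FR Λ M.obj M.property⟩
  map f := ObjectProperty.homMk ((jStar FR Λ).map f.hom)
  map_id M := ObjectProperty.hom_ext _ ((jStar FR Λ).map_id M.obj)
  map_comp f g := ObjectProperty.hom_ext _ ((jStar FR Λ).map_comp f.hom g.hom)

theorem sigma_isInvertedBy : (SigmaClass FR Λ).IsInvertedBy (jRes FR Λ) := by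
  intro M N f hf
  rw [← ObjectProperty.isIso_hom_iff, ← ObjectProperty.isIso_hom_iff]
  haveI : ∀ X : FF FR Λ, IsIso (((jRes FR Λ).map f).hom.hom.app X) := by
    rintro ⟨α⟩
    have h := hf α
    first
      | exact h
      | (simp only [pgapp, mapp] at h; exact h)
      | (simp only [pgapp, mapp, jRes, jStar, ObjectProperty.homMk_hom, Functor.whiskerLeft_app] at h ⊢; exact h)
      | (simp only [pgapp, mapp, jRes, jStar, jF, FF.toOFF] at h ⊢; exact h)
      | (simp only [pgapp, mapp] at h; convert h using 2)
  exact NatIso.isIso_of_isIso_app _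

/-- The canonical fully faithful functor `φ : Glid FR Λ ⥤ Prefrag FR Λ`,
the unique functor with `Q ⋙ φ = j^*`. -/
def phiF : Glid FR Λ ⥤ Prefrag FR Λ :=
  Localization.Construction.lift (jRes FR Λ) (sigma_isInvertedBy FR Λ)

theorem phiF_fac : QF FR Λ ⋙ phiF FR Λ = jRes FR Λ :=
  Localization.Construction.fac _ _

/-!
Let `c : oFF_Λ R ⥤ oFF_Λ R` collapse every object onto `∞`, a morphism `r : X ⟶ Y` going to
`r ∈ R = End(∞)`. The maps `M(1_{X,∞})` form a natural transformation `M ⟶ M ∘ c`, and `κ(M)` is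
its image, a subfunctor of `M ∘ c`. Since `c` sends every `1_{X,Y}` to the identity, `κ(M)` is a
preglider; the unit `M ⟶ κ(M)` is the corestriction, surjective everywhere and bijective at `∞`.
For a preglider `P` it is an isomorphism, whose inverse is the counit. Both triangle identities
reduce to this, since `κ` applied to the unit of `M` is the unit of `κ(M)`: everything is
computed inside `M(∞)`.
-/

end GliderPaper

namespace CategoryTheory.NatTrans

variable {C : Type*} [Category* C] {F G F' G' : C ⥤ AddCommGrpCat.{u}}

def image (α : F ⟶ G) : C ⥤ AddCommGrpCat.{u} where
  obj X := .of (α.app X).hom.range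
  map {X Y} f := AddCommGrpCat.ofHom <| AddMonoidHom.codRestrict
    ((G.map f).hom.comp (α.app X).hom.range.subtype) _ <| by
      rintro ⟨_, x, rfl⟩
      exact ⟨F.map f x, NatTrans.naturality_apply α f x⟩
  map_id _ := by ext; simp
  map_comp _ _ := by ext; simp

variable (α : F ⟶ G)

def toImage : F ⟶ α.image where
  app X := AddCommGrpCat.ofHom (α.app X).hom.rangeRestrict
  naturality X Y f := by ext x; exact Subtype.ext (NatTrans.naturality_apply α f x)

def imageι : α.image ⟶ G where
  app X := AddCommGrpCat.ofHom (α.app X).hom.range.subtype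

theorem toImage_imageι : α.toImage ≫ α.imageι = α := rfl

theorem imageι_app_injective (X : C) : Function.Injective (α.imageι.app X) :=
  Subtype.val_injective

theorem toImage_app_surjective (X : C) : Function.Surjective (α.toImage.app X) :=
  (α.app X).hom.rangeRestrict_surjective

instance : Mono α.imageι :=
  have (X : C) : Mono (α.imageι.app X) :=
    ConcreteCategory.mono_of_injective _ (α.imageι_app_injective X)
  NatTrans.mono_of_mono_app _

instance [Preadditive C] [G.Additive] : α.image.Additive where
  map_add {_ _ f g} := by
    ext x
    exact Subtype.ext (congrArg (· x.1) (G.map_add (f := f) (g := g)))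

theorem image_map_injective {X Y : C} {f : X ⟶ Y} (hf : Function.Injective (G.map f)) :
    Function.Injective (α.image.map f) :=
  fun _ _ h => Subtype.ext (hf (congrArg Subtype.val h))

theorem toImage_app_bijective {X : C} (hα : Function.Injective (α.app X)) :
    Function.Bijective (α.toImage.app X) :=
  ⟨fun _ _ h => hα (congrArg Subtype.val h), α.toImage_app_surjective X⟩

theorem isIso_toImage (hα : ∀ X, Function.Injective (α.app X)) : IsIso α.toImage :=
  have (X : C) : IsIso (α.toImage.app X) :=
    (ConcreteCategory.isIso_iff_bijective _).mpr (α.toImage_app_bijective (hα X))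
  NatIso.isIso_of_isIso_app _

variable {α} {α' : F' ⟶ G'}

def imageMap (u : F ⟶ F') (v : G ⟶ G') (w : α ≫ v = u ≫ α') : α.image ⟶ α'.image where
  app X := AddCommGrpCat.ofHom <| AddMonoidHom.codRestrict
    ((v.app X).hom.comp (α.app X).hom.range.subtype) _ <| by
      rintro ⟨_, x, rfl⟩
      exact ⟨u.app X x, (ConcreteCategory.congr_hom (congr_app w X) x).symm⟩
  naturality X Y f := by ext x; exact Subtype.ext (NatTrans.naturality_apply v f x.1)

theorem imageMap_imageι (u : F ⟶ F') (v : G ⟶ G') (w : α ≫ v = u ≫ α') :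
    imageMap u v w ≫ α'.imageι = α.imageι ≫ v := rfl

theorem toImage_imageMap (u : F ⟶ F') (v : G ⟶ G') (w : α ≫ v = u ≫ α') :
    α.toImage ≫ imageMap u v w = u ≫ α'.toImage := by
  rw [← cancel_mono α'.imageι, Category.assoc, Category.assoc, imageMap_imageι, toImage_imageι,
    ← Category.assoc, toImage_imageι, w]

end CategoryTheory.NatTrans

namespace GliderPaper

section Statements

variable {Γ : Type u} [Group Γ] [PartialOrder Γ]
  [CovariantClass Γ Γ (· * ·) (· ≤ ·)] [CovariantClass Γ Γ (Function.swap (· * ·)) (· ≤ ·)]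
  {R : Type u} [Ring R]

variable (FR : RingFiltration Γ R) (Λ : Set Γ)

namespace OFF

theorem le_infty : ∀ X : OFF FR Λ, le FR Λ X infty
  | of _ => trivial
  | infty => trivial

def collapse : OFF FR Λ ⥤ OFF FR Λ where
  obj _ := infty
  map f := ⟨f.1, AddSubgroup.mem_top _⟩

instance : (collapse FR Λ).Additive := ⟨rfl⟩

def toCollapse : 𝟭 (OFF FR Λ) ⟶ collapse FR Λ where
  app X := unitHom FR Λ X infty (le_infty FR Λ X)
  naturality _ _ f := Subtype.ext ((one_mul f.1).trans (mul_one f.1).symm)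

end OFF

variable {FR Λ}

theorem injective_map_id_infty (M : Mod (OFF FR Λ)) :
    Function.Injective (M.obj.map (𝟙 (OFF.infty : OFF FR Λ))) := by
  rw [M.obj.map_id]
  exact fun _ _ => id

def toInftyNat (M : Mod (OFF FR Λ)) : M.obj ⟶ OFF.collapse FR Λ ⋙ M.obj :=
  Functor.whiskerRight (OFF.toCollapse FR Λ) M.obj

def kappaMod (M : Mod (OFF FR Λ)) : Mod (OFF FR Λ) :=
  AdditiveFunctor.of (toInftyNat M).image

theorem isPreglider_kappaMod (M : Mod (OFF FR Λ)) : IsPreglider FR Λ (kappaMod M) := by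
  intro X Y h
  exact NatTrans.image_map_injective _ (f := unitHom FR Λ X Y h) (injective_map_id_infty M)

theorem toInftyNat_naturality {M N : Mod (OFF FR Λ)} (φ : M ⟶ N) :
    toInftyNat M ≫ Functor.whiskerLeft _ φ.hom = φ.hom ≫ toInftyNat N := by
  ext X : 2
  exact φ.hom.naturality ((OFF.toCollapse FR Λ).app X)

variable (FR Λ)

def kappa : Mod (OFF FR Λ) ⥤ Preglid FR Λ where
  obj M := ⟨kappaMod M, isPreglider_kappaMod M⟩
  map φ := ObjectProperty.homMk <| ObjectProperty.homMk <|
    NatTrans.imageMap φ.hom (Functor.whiskerLeft _ φ.hom) (toInftyNat_naturality φ)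
  map_id _ := rfl
  map_comp _ _ := rfl

def kappaUnit : 𝟭 (Mod (OFF FR Λ)) ⟶ kappa FR Λ ⋙ iotaF FR Λ where
  app M := ObjectProperty.homMk (toInftyNat M).toImage
  naturality _ _ φ := by
    ext1
    exact (NatTrans.toImage_imageMap _ _ (toInftyNat_naturality φ)).symm

variable {FR Λ} in
def kappaUnitIso (P : Preglid FR Λ) : P.obj.obj ≅ (toInftyNat P.obj).image :=
  have := NatTrans.isIso_toImage (toInftyNat P.obj) fun X =>
    P.property X .infty (OFF.le_infty FR Λ X)
  asIso (toInftyNat P.obj).toImage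

def kappaCounit : iotaF FR Λ ⋙ kappa FR Λ ⟶ 𝟭 (Preglid FR Λ) where
  app P := ObjectProperty.homMk <| ObjectProperty.homMk (kappaUnitIso P).inv
  naturality P Q ψ := by
    ext1; ext1
    change NatTrans.imageMap _ _ (toInftyNat_naturality ψ.hom) ≫ (kappaUnitIso Q).inv =
      (kappaUnitIso P).inv ≫ ψ.hom.hom
    rw [← cancel_epi (kappaUnitIso P).hom, Iso.hom_inv_id_assoc, ← Category.assoc, Iso.comp_inv_eq]
    exact NatTrans.toImage_imageMap _ _ _

-- Both sides act on `κ(M)(X) ⊆ M(∞)` by `M(1_{∞,∞}) = id`.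
theorem kappa_map_kappaUnit_app (M : Mod (OFF FR Λ)) :
    (kappa FR Λ).map ((kappaUnit FR Λ).app M) =
      ObjectProperty.homMk (ObjectProperty.homMk (kappaUnitIso ((kappa FR Λ).obj M)).hom) := by
  ext1; ext1; ext X x
  rfl

def kappaAdj : kappa FR Λ ⊣ iotaF FR Λ where
  unit := kappaUnit FR Λ
  counit := kappaCounit FR Λ
  left_triangle_components M := by
    rw [kappa_map_kappaUnit_app]
    ext1; ext1
    exact (kappaUnitIso ((kappa FR Λ).obj M)).hom_inv_id
  right_triangle_components P := by
    ext1
    exact (kappaUnitIso P).hom_inv_id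

/-- The inclusion `ι : Preglid FR ⥤ Mod oFF_Λ R` admits a left adjoint
`κ` given on objects by `κ(M)(λ) = im(M(1_{λ,∞}) : M(λ) → M(∞))` and `κ(M)(∞) = M(∞)`,
with the unit of the adjunction given by the canonical maps `M(λ) → im(M(1_{λ,∞}))`.
This is expressed by: the unit is bijective at `∞`, surjective at every `λ ∈ Λ`, and
under the identification at `∞` the subobject `κ(M)(λ) ⊆ κ(M)(∞)` corresponds exactly to
the image of `M(1_{λ,∞})` (which pins down `κ(M)(λ)` as that image, with the unit the
canonical corestriction). -/
theorem statement_4 (FR : RingFiltration Γ R) (Λ : Set Γ) :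
    ∃ (κ : Mod (OFF FR Λ) ⥤ Preglid FR Λ) (adj : κ ⊣ iotaF FR Λ),
      ∀ M : Mod (OFF FR Λ),
        Function.Bijective (mapp (adj.unit.app M) OFF.infty) ∧
        (∀ α : Λ, Function.Surjective (mapp (adj.unit.app M) (OFF.of α))) ∧
        (∀ α : Λ,
          Set.range (fun x : M.obj.obj (OFF.of α) =>
            mapp (adj.unit.app M) OFF.infty
              (M.obj.map (unitHom FR Λ (OFF.of α) OFF.infty trivial) x)) =
          Set.range ((κ.obj M).obj.obj.map
            (unitHom FR Λ (OFF.of α) OFF.infty trivial))) := by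
  refine ⟨kappa FR Λ, kappaAdj FR Λ, fun M => ⟨?_, fun α => ?_, fun α => ?_⟩⟩
  · exact NatTrans.toImage_app_bijective _ (injective_map_id_infty M)
  · exact NatTrans.toImage_app_surjective _ _
  · refine Eq.trans ?_ ((NatTrans.toImage_app_surjective _ (OFF.of α)).range_comp _)
    exact congrArg Set.range (funext (NatTrans.naturality_apply (toInftyNat M).toImage _))

end Statements

end GliderPaper
end
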